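/- Let d ≥ 2 be even and m ∈ ℤ, and define integers u_k = c_{d−k}(m) · m^k + (−1)^{d+k−1} · c_{k−1}(m) · m^{d+1−k} for k = 0, …, d, where c_{−1}(m) = 0. Then gcd(u_0, u_1, …, u_d) = 2 if d ≡ 2 (mod 6) and m is odd, and gcd(u_0, u_1, …, u_d) = 1 otherwise. -/
import Mathlib


/-- Shifted continuant numbers (integer version): `cseqZ m n = c_{n-1}(m)`, where
`c_{-1} = 0`, `c_0 = 1` and `c_k = c_{k-1} + m^2 c_{k-2}` for `k ≥ 1`. -/
def cseqZ (m : ℤ) : ℕ → ℤ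
  | 0 => 0
  | 1 => 1
  | (n+2) => cseqZ m (n+1) + m ^ 2 * cseqZ m n

/-- `u_k = c_{d-k}(m)·m^k + (-1)^{d+k-1}·c_{k-1}(m)·m^{d+1-k}`, with `c_{-1} = 0`
(integer version). -/
def uvalZ (d : ℕ) (m : ℤ) (k : ℕ) : ℤ :=
  cseqZ m (d - k + 1) * m ^ k + (-1 : ℤ) ^ (d + k - 1) * cseqZ m k * m ^ (d + 1 - k)

/-- `c_n ≡ 1 (mod m)` for `n ≥ 0`, i.e. `m ∣ cseqZ m (n+1) - 1`. -/
lemma cseqZ_mod_m (m : ℤ) : ∀ n, m ∣ cseqZ m (n + 1) - 1 := by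
  intro n
  induction n using Nat.twoStepInduction with
  | zero => simp [cseqZ]
  | one => simp [cseqZ]
  | more n ih1 ih2 =>
    have h : cseqZ m (n + 3) - 1 =
        (cseqZ m (n + 2) - 1) + m * (m * cseqZ m (n + 1)) := by
      show cseqZ m (n + 1 + 2) - 1 = _
      rw [cseqZ]; ring
    rw [h]
    exact dvd_add ih2 (Dvd.intro _ rfl)

/-- Determinant identity: `c_{n+1} c_{n-1} - c_n ^ 2 = (-1)^{n+1} m^{2n}`. -/
lemma cseqZ_det (m : ℤ) : ∀ n, cseqZ m (n + 2) * cseqZ m n - (cseqZ m (n + 1)) ^ 2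
    = (-1) ^ (n + 1) * m ^ (2 * n) := by
  intro n
  induction n with
  | zero => simp [cseqZ]
  | succ n ih =>
    have h3 : cseqZ m (n + 3) = cseqZ m (n + 2) + m ^ 2 * cseqZ m (n + 1) := by
      show cseqZ m (n + 1 + 2) = _; rw [cseqZ]
    have h2 : cseqZ m (n + 2) = cseqZ m (n + 1) + m ^ 2 * cseqZ m n := by
      rw [cseqZ]
    have e1 : ((-1 : ℤ)) ^ (n + 1 + 1) = (-1) * (-1) ^ (n + 1) := by
      rw [pow_succ]; ring
    have e2 : (m : ℤ) ^ (2 * (n + 1)) = m ^ (2 * n) * m ^ 2 := by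
      rw [show 2 * (n + 1) = 2 * n + 2 by ring, pow_add]
    show cseqZ m (n + 3) * cseqZ m (n + 1) - (cseqZ m (n + 2)) ^ 2 = _
    rw [h3, e1, e2]
    have : (cseqZ m (n + 2) + m ^ 2 * cseqZ m (n + 1)) * cseqZ m (n + 1) -
        cseqZ m (n + 2) ^ 2 =
        -(m ^ 2) * (cseqZ m (n + 2) * cseqZ m n - cseqZ m (n + 1) ^ 2) := by
      rw [h2]; ring
    rw [this, ih]; ring

/-- Parity of the continuants for odd `m`: period 3 pattern 0,1,1. -/
lemma cseqZ_parity (m : ℤ) (hm : Odd m) :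
    ∀ n, ((cseqZ m n : ZMod 2)) = if n % 3 = 0 then 0 else 1 := by
  have hm2 : ((m : ZMod 2)) = 1 := by
    obtain ⟨t, rfl⟩ := hm
    push_cast
    rw [show (2 : ZMod 2) = 0 from rfl]
    ring
  intro n
  induction n using Nat.twoStepInduction with
  | zero => simp [cseqZ]
  | one => simp [cseqZ]
  | more n ih1 ih2 =>
    have h : ((cseqZ m (n + 2) : ZMod 2)) =
        ((cseqZ m (n + 1) : ZMod 2)) + ((cseqZ m n : ZMod 2)) := by
      rw [cseqZ]; push_cast [hm2]; ring
    rw [h, ih1, ih2]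
    have h3 : n % 3 = 0 ∨ n % 3 = 1 ∨ n % 3 = 2 := by omega
    rcases h3 with h3 | h3 | h3 <;>
      simp only [h3, show (n+1) % 3 = (n%3+1)%3 from by omega,
        show (n+2) % 3 = (n%3+2)%3 from by omega] <;> decide

theorem stmt19 (d : ℕ) (hd : 2 ≤ d) (hde : Even d) (m : ℤ) :
    (d % 6 = 2 ∧ Odd m →
      Finset.univ.gcd (fun k : Fin (d+1) => uvalZ d m (k : ℕ)) = 2) ∧
    (¬(d % 6 = 2 ∧ Odd m) →
      Finset.univ.gcd (fun k : Fin (d+1) => uvalZ d m (k : ℕ)) = 1) := by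
  obtain ⟨r, hr⟩ := hde
  set g : ℤ := Finset.univ.gcd (fun k : Fin (d+1) => uvalZ d m (k : ℕ)) with hgdef
  have hgnn : 0 ≤ g := Int.nonneg_of_normalize_eq_self Finset.normalize_gcd
  -- u_0 = c_d
  have hu0 : uvalZ d m 0 = cseqZ m (d + 1) := by
    simp [uvalZ, cseqZ]
  -- u_1 = m * (c_{d-1} + m^{d-1})
  have hu1 : uvalZ d m 1 = m * (cseqZ m d + m ^ (d - 1)) := by
    have h1 : d - 1 + 1 = d := by omega
    have h2 : d + 1 - 1 = d := by omega
    have hmd : m ^ d = m ^ (d - 1) * m := by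
      conv_lhs => rw [show d = (d - 1) + 1 by omega]
      rw [pow_succ]
    simp only [uvalZ, h1, h2]
    rw [Even.neg_one_pow (by exact ⟨r, by omega⟩ : Even d), hmd,
      show cseqZ m 1 = 1 from rfl]
    ring
  have hg0 : g ∣ cseqZ m (d + 1) := by
    have h := Finset.gcd_dvd (f := fun k : Fin (d+1) => uvalZ d m (k : ℕ))
      (Finset.mem_univ (⟨0, by omega⟩ : Fin (d+1)))
    simpa [hu0] using h
  have hg1 : g ∣ m * (cseqZ m d + m ^ (d - 1)) := by
    have h := Finset.gcd_dvd (f := fun k : Fin (d+1) => uvalZ d m (k : ℕ))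
      (Finset.mem_univ (⟨1, by omega⟩ : Fin (d+1)))
    simpa [hu1] using h
  -- g is coprime to m
  have hcop : IsCoprime g m := by
    obtain ⟨t, ht⟩ := cseqZ_mod_m m d
    have hc : cseqZ m (d + 1) = 1 + m * t := by linarith
    have h1 : IsCoprime (1 + m * t) m := (isCoprime_one_left).add_mul_left_left t
    exact h1.of_isCoprime_of_dvd_left (hc ▸ hg0)
  have hgB : g ∣ cseqZ m d + m ^ (d - 1) := hcop.dvd_of_dvd_mul_left hg1
  -- determinant identity at n = d-1
  have hdet : cseqZ m (d + 1) * cseqZ m (d - 1) - (cseqZ m d) ^ 2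
      = m ^ (2 * (d - 1)) := by
    have h := cseqZ_det m (d - 1)
    have e1 : d - 1 + 2 = d + 1 := by omega
    have e2 : d - 1 + 1 = d := by omega
    rw [e1, e2] at h
    rw [h, Even.neg_one_pow (by exact ⟨r, by omega⟩), one_mul]
  -- g ∣ 2
  have hg2 : g ∣ 2 := by
    have hA : g ∣ cseqZ m d ^ 2 - m ^ (2 * (d - 1)) := by
      have : cseqZ m d ^ 2 - m ^ (2 * (d - 1)) =
          (cseqZ m d - m ^ (d - 1)) * (cseqZ m d + m ^ (d - 1)) := by
        rw [show 2 * (d - 1) = (d - 1) + (d - 1) by ring, pow_add]; ring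
      rw [this]
      exact Dvd.dvd.mul_left hgB _
    have hB : g ∣ 2 * m ^ (2 * (d - 1)) := by
      have key : 2 * m ^ (2 * (d - 1)) =
          cseqZ m (d + 1) * cseqZ m (d - 1) - (cseqZ m d ^ 2 - m ^ (2 * (d - 1)))
          - (cseqZ m (d + 1) * cseqZ m (d - 1) - (cseqZ m d) ^ 2 - m ^ (2 * (d - 1))) := by
        ring
      rw [key]
      have : cseqZ m (d + 1) * cseqZ m (d - 1) - (cseqZ m d) ^ 2 - m ^ (2 * (d - 1)) = 0 := by
        rw [hdet]; ring
      rw [this, sub_zero]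
      exact dvd_sub (Dvd.dvd.mul_right hg0 _) hA
    exact (hcop.pow_right).dvd_of_dvd_mul_right hB
  constructor
  · -- case d ≡ 2 mod 6, m odd : gcd = 2
    rintro ⟨hd6, hmodd⟩
    have h2g : (2 : ℤ) ∣ g := by
      apply Finset.dvd_gcd
      intro k _
      suffices hz : ((uvalZ d m (k : ℕ) : ZMod 2)) = 0 by
        exact_mod_cast (ZMod.intCast_zmod_eq_zero_iff_dvd _ 2).1 hz
      have hk : (k : ℕ) ≤ d := by have := k.isLt; omega
      have hm2 : ((m : ZMod 2)) = 1 := by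
        obtain ⟨t, rfl⟩ := hmodd
        push_cast
        rw [show (2 : ZMod 2) = 0 from rfl]
        ring
      have hc : ((uvalZ d m (k : ℕ) : ZMod 2)) =
          ((cseqZ m (d - (k : ℕ) + 1) : ZMod 2)) + ((cseqZ m (k : ℕ) : ZMod 2)) := by
        rw [uvalZ]; push_cast [hm2]
        rw [show (-1 : ZMod 2) = 1 from by decide]
        ring
      rw [hc, cseqZ_parity m hmodd, cseqZ_parity m hmodd]
      by_cases h : (k : ℕ) % 3 = 0
      · have : (d - (k : ℕ) + 1) % 3 = 0 := by omega
        simp [h, this]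
      · have : (d - (k : ℕ) + 1) % 3 ≠ 0 := by omega
        simp [h, this]
        decide
    exact Int.dvd_antisymm hgnn (by norm_num) hg2 h2g
  · -- otherwise : gcd = 1
    intro hnot
    have hodd : ¬ (2 : ℤ) ∣ cseqZ m (d + 1) := by
      rcases Int.even_or_odd m with hme | hmo
      · -- m even: c_d ≡ 1 mod m hence odd
        intro h2
        have h1 : (2 : ℤ) ∣ cseqZ m (d + 1) - 1 :=
          dvd_trans hme.two_dvd (cseqZ_mod_m m d)
        have h12 : (2 : ℤ) ∣ 1 := by simpa using dvd_sub h2 h1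
        norm_num at h12
      · -- m odd: then d % 6 ≠ 2, so (d+1) % 3 ≠ 0, so c_d is odd
        have hd6 : d % 6 ≠ 2 := fun h => hnot ⟨h, hmo⟩
        have h31 : (d + 1) % 3 ≠ 0 := by omega
        intro h2
        have := (ZMod.intCast_zmod_eq_zero_iff_dvd (cseqZ m (d+1)) 2).2 (by exact_mod_cast h2)
        rw [cseqZ_parity m hmo, if_neg h31] at this
        exact one_ne_zero this
    have h2ng : ¬ (2 : ℤ) ∣ g := fun h => hodd (h.trans hg0)
    have hle : g ≤ 2 := Int.le_of_dvd (by norm_num) hg2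
    have hne : g ≠ 0 := by
      intro h0
      rw [h0] at hg2
      norm_num at hg2
    have hor : g = 1 ∨ g = 2 := by omega
    rcases hor with h | h
    · exact h
    · exact absurd (h ▸ dvd_refl g) h2ng
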